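/- Let 𝒢 = {A_1, …, A_k} ⊂ UT(4,ℤ) with A_i = UT(α_i, β_i, κ_i; δ_i, ε_i, φ_i), suppose φ0(A_i) = ρ_i·(α, β, κ) with α, β, κ, ρ_i ∈ ℤ, and suppose supp(Λ) = {1, …, k}. Define Γ_i = α·ε_i − κ·δ_i for i = 1, …, k. If ρ_i Γ_j ≠ ρ_j Γ_i for some i, j ∈ {1, …, k}, then the identity matrix belongs to ⟨𝒢⟩. -/
import Mathlib


open Finset

/-- The 4×4 upper unitriangular integer matrix `UT(a,b,c;d,e,f)`. -/
def UT (a b c d e f : ℤ) : Matrix (Fin 4) (Fin 4) ℤ :=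
  !![1, a, d, f; 0, 1, b, e; 0, 0, 1, c; 0, 0, 0, 1]

/-- `φ0 : UT(4,ℤ) → ℤ³`, `UT(a,b,c;d,e,f) ↦ (a,b,c)`. -/
def phi0 (M : Matrix (Fin 4) (Fin 4) ℤ) : Fin 3 → ℤ :=
  ![M 0 1, M 1 2, M 2 3]

/-- Membership of an exponent vector `ℓ` in `Λ`:
`Σ ℓᵢρᵢ = 0`, `Σ ℓᵢΔᵢ = 0` and `Σ ℓᵢℰᵢ = 0`, where `Δᵢ = δᵢ − ½αᵢβᵢ` and
`ℰᵢ = εᵢ − ½βᵢκᵢ`. -/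
def InLambda {k : ℕ} (ρ α β κ δ ε : Fin k → ℤ) (ℓ : Fin k → ℕ) : Prop :=
  ∑ i, (ℓ i : ℤ) * ρ i = 0 ∧
    ∑ i, (ℓ i : ℚ) * ((δ i : ℚ) - (1 / 2) * (α i : ℚ) * (β i : ℚ)) = 0 ∧
    ∑ i, (ℓ i : ℚ) * ((ε i : ℚ) - (1 / 2) * (β i : ℚ) * (κ i : ℚ)) = 0

lemma UT_mul (a b c d e f a' b' c' d' e' f' : ℤ) :
    UT a b c d e f * UT a' b' c' d' e' f' =
      UT (a + a') (b + b') (c + c') (d + a * b' + d') (e + b * c' + e')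
        (f + a * e' + d * c' + f') := by
  ext i j
  fin_cases i <;> fin_cases j <;>
    simp [UT, Matrix.mul_apply, Fin.sum_univ_four, Matrix.vecHead, Matrix.vecTail] <;> ring

lemma UT_one : UT 0 0 0 0 0 0 = 1 := by
  ext i j
  fin_cases i <;> fin_cases j <;>
    simp [UT, Matrix.one_apply, Matrix.vecHead, Matrix.vecTail]

section Words

variable {k : ℕ}

def Sg (g : Fin k → ℤ) (w : List (Fin k)) : ℤ := (w.map g).sum

@[simp] lemma Sg_nil (g : Fin k → ℤ) : Sg g [] = 0 := rfl

@[simp] lemma Sg_cons (g : Fin k → ℤ) (x : Fin k) (w : List (Fin k)) :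
    Sg g (x :: w) = g x + Sg g w := by simp [Sg]

@[simp] lemma Sg_append (g : Fin k → ℤ) (w₁ w₂ : List (Fin k)) :
    Sg g (w₁ ++ w₂) = Sg g w₁ + Sg g w₂ := by simp [Sg]

@[simp] lemma Sg_reverse (g : Fin k → ℤ) (w : List (Fin k)) :
    Sg g w.reverse = Sg g w := by
  induction w with
  | nil => rfl
  | cons x w ih => rw [List.reverse_cons]; simp [ih]; ring

@[simp] lemma Sg_replicate (g : Fin k → ℤ) (n : ℕ) (u : Fin k) :
    Sg g (List.replicate n u) = n * g u := by simp [Sg, mul_comm]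

lemma Sg_smul (c : ℤ) (g : Fin k → ℤ) (w : List (Fin k)) :
    Sg (fun u => c * g u) w = c * Sg g w := by
  induction w with
  | nil => simp
  | cons x w ih => simp [ih]; ring

lemma Sg_congr {g h : Fin k → ℤ} (H : ∀ u, g u = h u) (w : List (Fin k)) :
    Sg g w = Sg h w := by
  induction w with
  | nil => rfl
  | cons x w ih => simp [ih, H x]

lemma Sg_sub (g h : Fin k → ℤ) (w : List (Fin k)) :
    Sg (fun u => g u - h u) w = Sg g w - Sg h w := by
  induction w with
  | nil => simp
  | cons x w ih => simp [ih]; ring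

variable (α β κ δ ε φ : Fin k → ℤ)

def D13 : List (Fin k) → ℤ
  | [] => 0
  | x :: w => δ x + α x * Sg β w + D13 w

def D24 : List (Fin k) → ℤ
  | [] => 0
  | x :: w => ε x + β x * Sg κ w + D24 w

def D14 : List (Fin k) → ℤ
  | [] => 0
  | x :: w => φ x + α x * D24 β κ ε w + δ x * Sg κ w + D14 w

@[simp] lemma D13_nil : D13 α β δ [] = 0 := rfl
@[simp] lemma D24_nil : D24 β κ ε [] = 0 := rfl
@[simp] lemma D14_nil : D14 α β κ δ ε φ [] = 0 := rfl

lemma D13_cons (x : Fin k) (w : List (Fin k)) :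
    D13 α β δ (x :: w) = δ x + α x * Sg β w + D13 α β δ w := rfl
lemma D24_cons (x : Fin k) (w : List (Fin k)) :
    D24 β κ ε (x :: w) = ε x + β x * Sg κ w + D24 β κ ε w := rfl
lemma D14_cons (x : Fin k) (w : List (Fin k)) :
    D14 α β κ δ ε φ (x :: w) =
      φ x + α x * D24 β κ ε w + δ x * Sg κ w + D14 α β κ δ ε φ w := rfl

lemma D13_append (w₁ w₂ : List (Fin k)) :
    D13 α β δ (w₁ ++ w₂) = D13 α β δ w₁ + Sg α w₁ * Sg β w₂ + D13 α β δ w₂ := by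
  induction w₁ with
  | nil => simp
  | cons x w ih => simp only [List.cons_append, D13_cons, ih, Sg_append, Sg_cons]; ring

lemma D24_append (w₁ w₂ : List (Fin k)) :
    D24 β κ ε (w₁ ++ w₂) = D24 β κ ε w₁ + Sg β w₁ * Sg κ w₂ + D24 β κ ε w₂ := by
  induction w₁ with
  | nil => simp
  | cons x w ih => simp only [List.cons_append, D24_cons, ih, Sg_append, Sg_cons]; ring

lemma D14_append (w₁ w₂ : List (Fin k)) :
    D14 α β κ δ ε φ (w₁ ++ w₂) = D14 α β κ δ ε φ w₁ + Sg α w₁ * D24 β κ ε w₂ +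
      D13 α β δ w₁ * Sg κ w₂ + D14 α β κ δ ε φ w₂ := by
  induction w₁ with
  | nil => simp
  | cons x w ih =>
      simp only [List.cons_append, D14_cons, ih, D24_append, D13_cons, Sg_append, Sg_cons]
      ring

lemma prod_word (A : Fin k → Matrix (Fin 4) (Fin 4) ℤ)
    (hA : ∀ u, A u = UT (α u) (β u) (κ u) (δ u) (ε u) (φ u)) :
    ∀ w : List (Fin k), (w.map A).prod =
      UT (Sg α w) (Sg β w) (Sg κ w) (D13 α β δ w) (D24 β κ ε w) (D14 α β κ δ ε φ w)
  | [] => by simp [UT_one]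
  | x :: w => by
      rw [List.map_cons, List.prod_cons, prod_word A hA w, hA x, UT_mul]
      simp only [Sg_cons, D13_cons, D24_cons, D14_cons]

lemma prod_word_mem (A : Fin k → Matrix (Fin 4) (Fin 4) ℤ) :
    ∀ w : List (Fin k), w ≠ [] → (w.map A).prod ∈ Subsemigroup.closure (Set.range A)
  | [], h => absurd rfl h
  | [x], _ => by
      simp only [List.map_cons, List.map_nil, List.prod_cons, List.prod_nil, mul_one]
      exact Subsemigroup.subset_closure ⟨x, rfl⟩
  | x :: y :: w, _ => by
      rw [List.map_cons, List.prod_cons]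
      exact Subsemigroup.mul_mem _ (Subsemigroup.subset_closure ⟨x, rfl⟩)
        (prod_word_mem A (y :: w) (by simp))

end Words

section Proportional

variable {k : ℕ} (α β κ δ ε φ ρ : Fin k → ℤ) (a₀ b₀ c₀ : ℤ)
variable (hα : ∀ u, α u = a₀ * ρ u) (hβ : ∀ u, β u = b₀ * ρ u) (hκ : ∀ u, κ u = c₀ * ρ u)

include hα in
lemma Sg_alpha (w : List (Fin k)) : Sg α w = a₀ * Sg ρ w := by
  rw [Sg_congr hα w, Sg_smul]

include hβ in
lemma Sg_beta (w : List (Fin k)) : Sg β w = b₀ * Sg ρ w := by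
  rw [Sg_congr hβ w, Sg_smul]

include hκ in
lemma Sg_kappa (w : List (Fin k)) : Sg κ w = c₀ * Sg ρ w := by
  rw [Sg_congr hκ w, Sg_smul]

include hα hβ in
lemma two_D13 (w : List (Fin k)) :
    2 * D13 α β δ w = 2 * Sg δ w + a₀ * b₀ * ((Sg ρ w) ^ 2 - Sg (fun u => ρ u * ρ u) w) := by
  induction w with
  | nil => simp
  | cons x w ih =>
      rw [D13_cons, Sg_cons, Sg_cons, Sg_cons, hα x, Sg_beta β ρ b₀ hβ]
      linear_combination ih

include hβ hκ in
lemma two_D24 (w : List (Fin k)) :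
    2 * D24 β κ ε w = 2 * Sg ε w + b₀ * c₀ * ((Sg ρ w) ^ 2 - Sg (fun u => ρ u * ρ u) w) := by
  induction w with
  | nil => simp
  | cons x w ih =>
      rw [D24_cons, Sg_cons, Sg_cons, Sg_cons, hβ x, Sg_kappa κ ρ c₀ hκ]
      linear_combination ih

include hα hβ hκ in
lemma comb_M (w : List (Fin k)) :
    c₀ * D13 α β δ w - a₀ * D24 β κ ε w = c₀ * Sg δ w - a₀ * Sg ε w := by
  induction w with
  | nil => simp
  | cons x w ih =>
      rw [D13_cons, D24_cons, Sg_cons, Sg_cons, hα x, hβ x, Sg_beta β ρ b₀ hβ,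
        Sg_kappa κ ρ c₀ hκ]
      linear_combination ih

lemma D24_rev (w : List (Fin k)) :
    D24 β κ ε w + D24 β κ ε w.reverse =
      2 * Sg ε w + Sg β w * Sg κ w - Sg (fun u => β u * κ u) w := by
  induction w with
  | nil => simp
  | cons x w ih =>
      rw [List.reverse_cons, D24_append, D24_cons]
      simp only [Sg_reverse, Sg_cons, D24_cons, D24_nil, Sg_nil]
      linear_combination ih

def Nw : List (Fin k) → ℤ
  | [] => 0
  | x :: w => ρ x * ((Sg ρ w) ^ 2 - Sg (fun u => ρ u * ρ u) w) + Nw w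

lemma three_Nw (w : List (Fin k)) :
    3 * Nw ρ w = (Sg ρ w) ^ 3 - 3 * Sg ρ w * Sg (fun u => ρ u * ρ u) w +
      2 * Sg (fun u => ρ u * ρ u * ρ u) w := by
  induction w with
  | nil => simp [Nw]
  | cons x w ih =>
      rw [Nw, Sg_cons, Sg_cons, Sg_cons]
      linear_combination ih

include hα hβ hκ in
lemma D14_rev (w : List (Fin k)) :
    D14 α β κ δ ε φ w + D14 α β κ δ ε φ w.reverse =
      2 * Sg φ w + a₀ * (Sg ρ w * Sg ε w - Sg (fun u => ρ u * ε u) w) +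
        c₀ * (Sg ρ w * Sg δ w - Sg (fun u => ρ u * δ u) w) + a₀ * b₀ * c₀ * Nw ρ w := by
  induction w with
  | nil => simp [Nw]
  | cons x w ih =>
      rw [List.reverse_cons, D14_append, D14_cons, Nw]
      simp only [Sg_reverse, Sg_cons, D14_cons, D14_nil, D24_cons, D24_nil, Sg_nil, D13_nil]
      have hM := comb_M α β κ δ ε ρ a₀ b₀ c₀ hα hβ hκ w.reverse
      rw [Sg_reverse, Sg_reverse] at hM
      have h24 := D24_rev β κ ε w
      have hsα := Sg_alpha α ρ a₀ hα w
      have hsβ := Sg_beta β ρ b₀ hβ w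
      have hsκ := Sg_kappa κ ρ c₀ hκ w
      have hsβκ : Sg (fun u => β u * κ u) w = b₀ * c₀ * Sg (fun u => ρ u * ρ u) w := by
        rw [Sg_congr (fun u => by rw [hβ u, hκ u]; ring :
          ∀ u, β u * κ u = b₀ * c₀ * (ρ u * ρ u)) w, Sg_smul]
      rw [hsβ, hsκ, hsβκ] at h24
      rw [hα x, hκ x, hsα, hsκ]
      linear_combination ih + a₀ * ρ x * h24 + ρ x * hM
end Proportional

section Swap

variable {k : ℕ} (α β κ δ ε φ ρ : Fin k → ℤ) (a₀ b₀ c₀ : ℤ)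
variable (hα : ∀ u, α u = a₀ * ρ u) (hβ : ∀ u, β u = b₀ * ρ u) (hκ : ∀ u, κ u = c₀ * ρ u)

include hα hβ hκ in
lemma swap_diff (U X Y V : List (Fin k)) :
    D14 α β κ δ ε φ (U ++ (X ++ (Y ++ V))) - D14 α β κ δ ε φ (U ++ (Y ++ (X ++ V))) =
      Sg α X * D24 β κ ε Y - Sg α Y * D24 β κ ε X +
        D13 α β δ X * Sg κ Y - D13 α β δ Y * Sg κ X := by
  simp only [D14_append, D24_append, D13_append, Sg_append,
    Sg_alpha α ρ a₀ hα, Sg_beta β ρ b₀ hβ, Sg_kappa κ ρ c₀ hκ]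
  ring

include hα hβ hκ in
lemma swap_val (i j : Fin k) (n p : ℕ) :
    2 * (Sg α (List.replicate n i) * D24 β κ ε (List.replicate p j)
      - Sg α (List.replicate p j) * D24 β κ ε (List.replicate n i)
      + D13 α β δ (List.replicate n i) * Sg κ (List.replicate p j)
      - D13 α β δ (List.replicate p j) * Sg κ (List.replicate n i))
    = 2 * ((n : ℤ) * (p : ℤ) *
        (ρ i * (a₀ * ε j - c₀ * δ j) - ρ j * (a₀ * ε i - c₀ * δ i))) := by
  have t13i := two_D13 α β δ ρ a₀ b₀ hα hβ (List.replicate n i)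
  have t13j := two_D13 α β δ ρ a₀ b₀ hα hβ (List.replicate p j)
  have t24i := two_D24 β κ ε ρ b₀ c₀ hβ hκ (List.replicate n i)
  have t24j := two_D24 β κ ε ρ b₀ c₀ hβ hκ (List.replicate p j)
  simp only [Sg_replicate] at t13i t13j t24i t24j ⊢
  rw [hα i, hα j, hκ i, hκ j]
  linear_combination ((n : ℤ) * (a₀ * ρ i)) * t24j - ((p : ℤ) * (a₀ * ρ j)) * t24i +
    ((p : ℤ) * (c₀ * ρ j)) * t13i - ((n : ℤ) * (c₀ * ρ i)) * t13j

end Swap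

section Endgame

def Emat (t : ℤ) : Matrix (Fin 4) (Fin 4) ℤ := UT 0 0 0 0 0 t

lemma Emat_mul (s t : ℤ) : Emat s * Emat t = Emat (s + t) := by
  unfold Emat
  rw [UT_mul]
  norm_num

lemma Emat_zero : Emat 0 = 1 := UT_one

lemma Emat_pow (t : ℤ) : ∀ n : ℕ, Emat t ^ (n + 1) = Emat ((n + 1 : ℕ) * t)
  | 0 => by norm_num
  | n + 1 => by
      rw [pow_succ, Emat_pow t n, Emat_mul]
      push_cast
      ring_nf

lemma pow_mem_closure {M : Type*} [Monoid M] (S : Subsemigroup M) {a : M} (h : a ∈ S) :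
    ∀ n : ℕ, a ^ (n + 1) ∈ S
  | 0 => by simpa using h
  | n + 1 => by rw [pow_succ]; exact S.mul_mem (pow_mem_closure S h n) h

lemma one_mem_of_vals (S : Subsemigroup (Matrix (Fin 4) (Fin 4) ℤ)) (x y : ℤ)
    (hx : x ≤ 0) (hy : 0 ≤ y) (hEx : Emat x ∈ S) (hEy : Emat y ∈ S) :
    (1 : Matrix (Fin 4) (Fin 4) ℤ) ∈ S := by
  rcases eq_or_lt_of_le hx with h0 | hneg
  · rw [← Emat_zero]; rwa [h0] at hEx
  rcases eq_or_lt_of_le hy with h0 | hpos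
  · rw [← Emat_zero]; rwa [← h0] at hEy
  · have hy1 : y.toNat = (y.toNat - 1) + 1 := by omega
    have hx1 : (-x).toNat = ((-x).toNat - 1) + 1 := by omega
    have hmem : Emat x ^ y.toNat * Emat y ^ (-x).toNat ∈ S := by
      rw [hy1, hx1]
      exact S.mul_mem (pow_mem_closure S hEx _) (pow_mem_closure S hEy _)
    have hval : Emat x ^ y.toNat * Emat y ^ (-x).toNat = 1 := by
      rw [hy1, hx1, Emat_pow, Emat_pow, Emat_mul, ← hy1, ← hx1]
      have : (y.toNat : ℤ) * x + ((-x).toNat : ℤ) * y = 0 := by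
        rw [Int.toNat_of_nonneg (le_of_lt hpos), Int.toNat_of_nonneg (by linarith)]
        ring
      rw [this, Emat_zero]
    rwa [hval] at hmem

lemma four_vals (q1 qr1 q2 qr2 B V : ℤ) (hB1 : |q1 + qr1| ≤ B) (hB2 : |q2 + qr2| ≤ B)
    (h12 : q1 - q2 = V) (hr : qr2 - qr1 = V) (hV : B < |V|) :
    ∃ x y : ℤ, (x = q1 ∨ x = qr1 ∨ x = q2 ∨ x = qr2) ∧
      (y = q1 ∨ y = qr1 ∨ y = q2 ∨ y = qr2) ∧ x ≤ 0 ∧ 0 ≤ y := by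
  rcases abs_le.mp hB1 with ⟨hB1l, hB1r⟩
  rcases abs_le.mp hB2 with ⟨hB2l, hB2r⟩
  rcases le_or_gt q1 0 with h1 | h1
  · rcases le_or_gt 0 qr1 with h2 | h2
    · exact ⟨q1, qr1, Or.inl rfl, Or.inr (Or.inl rfl), h1, h2⟩
    · -- q1 ≤ 0, qr1 < 0 : both nonpositive
      rcases abs_cases V with ⟨hV1, _⟩ | ⟨hV1, _⟩
      · -- V = |V| > B > 0
        exact ⟨q1, qr2, Or.inl rfl, Or.inr (Or.inr (Or.inr rfl)), h1, by linarith⟩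
      · -- V = -|V| < 0
        exact ⟨qr1, q2, Or.inr (Or.inl rfl), Or.inr (Or.inr (Or.inl rfl)),
          le_of_lt h2, by linarith⟩
  · rcases le_or_gt 0 qr1 with h2 | h2
    · -- 0 < q1, 0 ≤ qr1 : both nonneg
      rcases abs_cases V with ⟨hV1, _⟩ | ⟨hV1, _⟩
      · exact ⟨q2, qr1, Or.inr (Or.inr (Or.inl rfl)), Or.inr (Or.inl rfl),
          by linarith, h2⟩
      · exact ⟨qr2, q1, Or.inr (Or.inr (Or.inr rfl)), Or.inl rfl,
          by linarith, le_of_lt h1⟩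
    · exact ⟨qr1, q1, Or.inr (Or.inl rfl), Or.inl rfl, le_of_lt h2, le_of_lt h1⟩

end Endgame

section MainAux

variable {k : ℕ}

@[simp] lemma Sg_flatMap (g : Fin k → ℤ) (f : Fin k → List (Fin k)) :
    ∀ l : List (Fin k), Sg g (l.flatMap f) = (l.map fun a => Sg g (f a)).sum
  | [] => rfl
  | x :: l => by
      rw [List.flatMap_cons, List.map_cons, List.sum_cons, Sg_append, Sg_flatMap g f l]

end MainAux

set_option maxHeartbeats 1600000 in
theorem stmt13 (k : ℕ) (α β κ δ ε φ : Fin k → ℤ)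
    (A : Fin k → Matrix (Fin 4) (Fin 4) ℤ)
    (hA : ∀ i, A i = UT (α i) (β i) (κ i) (δ i) (ε i) (φ i))
    (a₀ b₀ c₀ : ℤ) (ρ : Fin k → ℤ)
    (hρ : ∀ i, phi0 (A i) = ρ i • ![a₀, b₀, c₀])
    (hsupp : ∀ j : Fin k, ∃ ℓ : Fin k → ℕ, InLambda ρ α β κ δ ε ℓ ∧ ℓ j ≠ 0)
    (Γ : Fin k → ℤ) (hΓdef : ∀ i, Γ i = a₀ * ε i - c₀ * δ i)
    (hΓ : ∃ i j, ρ i * Γ j ≠ ρ j * Γ i) :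
    (1 : Matrix (Fin 4) (Fin 4) ℤ) ∈ Subsemigroup.closure (Set.range A) := by
  classical
  obtain ⟨i, j, hij⟩ := hΓ
  rw [hΓdef j, hΓdef i] at hij
  set d : ℤ := ρ i * (a₀ * ε j - c₀ * δ j) - ρ j * (a₀ * ε i - c₀ * δ i) with hd_def
  have hd : d ≠ 0 := sub_ne_zero.mpr hij
  have hij' : i ≠ j := by rintro rfl; exact hd (by rw [hd_def]; ring)
  -- proportionality
  have hα : ∀ u, α u = a₀ * ρ u := by
    intro u; have h := congrFun (hρ u) 0
    rw [hA u] at h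
    simp [phi0, UT, Matrix.vecHead, Matrix.vecTail] at h
    rw [h]; ring
  have hβ : ∀ u, β u = b₀ * ρ u := by
    intro u; have h := congrFun (hρ u) 1
    rw [hA u] at h
    simp [phi0, UT, Matrix.vecHead, Matrix.vecTail] at h
    rw [h]; ring
  have hκ : ∀ u, κ u = c₀ * ρ u := by
    intro u; have h := congrFun (hρ u) 2
    rw [hA u] at h
    simp [phi0, UT, Matrix.vecHead, Matrix.vecTail] at h
    rw [h]; ring
  -- the positive Λ vector L
  choose ℓs hmem hne using hsupp
  set L : Fin k → ℕ := fun u => ∑ v, ℓs v u with hL_def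
  have hL1 : ∀ u, 1 ≤ L u := by
    intro u
    calc 1 ≤ ℓs u u := Nat.one_le_iff_ne_zero.mpr (hne u)
    _ ≤ L u := Finset.single_le_sum (f := fun v => ℓs v u) (fun v _ => Nat.zero_le _) (mem_univ u)
  set SL : (Fin k → ℤ) → ℤ := fun g => ∑ u, (L u : ℤ) * g u with hSL_def
  have hLcast : ∀ u, (L u : ℤ) = ∑ v, (ℓs v u : ℤ) := by
    intro u; rw [hL_def]; push_cast; rfl
  have hLcastQ : ∀ u, (L u : ℚ) = ∑ v, (ℓs v u : ℚ) := by
    intro u; rw [hL_def]; push_cast; rfl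
  have hSLρ : SL ρ = 0 := by
    simp only [hSL_def]
    calc ∑ u, (L u : ℤ) * ρ u = ∑ u, ∑ v, (ℓs v u : ℤ) * ρ u :=
          Finset.sum_congr rfl fun u _ => by rw [hLcast u, Finset.sum_mul]
      _ = ∑ v, ∑ u, (ℓs v u : ℤ) * ρ u := Finset.sum_comm
      _ = 0 := Finset.sum_eq_zero fun v _ => (hmem v).1
  have hSLδ' : 2 * SL δ = a₀ * b₀ * SL (fun u => ρ u * ρ u) := by
    have hLQ : ∑ u, (L u : ℚ) * ((δ u : ℚ) - 1/2 * (α u : ℚ) * (β u : ℚ)) = 0 := by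
      calc ∑ u, (L u : ℚ) * ((δ u : ℚ) - 1/2 * (α u : ℚ) * (β u : ℚ))
          = ∑ u, ∑ v, (ℓs v u : ℚ) * ((δ u : ℚ) - 1/2 * (α u : ℚ) * (β u : ℚ)) :=
            Finset.sum_congr rfl fun u _ => by rw [hLcastQ u, Finset.sum_mul]
        _ = ∑ v, ∑ u, (ℓs v u : ℚ) * ((δ u : ℚ) - 1/2 * (α u : ℚ) * (β u : ℚ)) :=
            Finset.sum_comm
        _ = 0 := Finset.sum_eq_zero fun v _ => (hmem v).2.1
    have h2 : ∑ u, (L u : ℚ) * (2 * (δ u : ℚ) - (α u : ℚ) * (β u : ℚ)) = 0 := by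
      have e : ∀ u ∈ univ, (L u : ℚ) * (2 * (δ u : ℚ) - (α u : ℚ) * (β u : ℚ)) =
          2 * ((L u : ℚ) * ((δ u : ℚ) - 1/2 * (α u : ℚ) * (β u : ℚ))) := fun u _ => by ring
      rw [Finset.sum_congr rfl e, ← Finset.mul_sum, hLQ, mul_zero]
    have hz : ∑ u, (L u : ℤ) * (2 * δ u - α u * β u) = 0 := by exact_mod_cast h2
    have hz2 : ∑ u, (L u : ℤ) * (2 * δ u - α u * β u) =
        ∑ u, (2 * ((L u : ℤ) * δ u) - a₀ * b₀ * ((L u : ℤ) * (ρ u * ρ u))) :=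
      Finset.sum_congr rfl fun u _ => by rw [hα u, hβ u]; ring
    rw [hz2, Finset.sum_sub_distrib, ← Finset.mul_sum, ← Finset.mul_sum] at hz
    simp only [hSL_def]
    linarith [hz]
  have hSLε' : 2 * SL ε = b₀ * c₀ * SL (fun u => ρ u * ρ u) := by
    have hLQ : ∑ u, (L u : ℚ) * ((ε u : ℚ) - 1/2 * (β u : ℚ) * (κ u : ℚ)) = 0 := by
      calc ∑ u, (L u : ℚ) * ((ε u : ℚ) - 1/2 * (β u : ℚ) * (κ u : ℚ))
          = ∑ u, ∑ v, (ℓs v u : ℚ) * ((ε u : ℚ) - 1/2 * (β u : ℚ) * (κ u : ℚ)) :=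
            Finset.sum_congr rfl fun u _ => by rw [hLcastQ u, Finset.sum_mul]
        _ = ∑ v, ∑ u, (ℓs v u : ℚ) * ((ε u : ℚ) - 1/2 * (β u : ℚ) * (κ u : ℚ)) :=
            Finset.sum_comm
        _ = 0 := Finset.sum_eq_zero fun v _ => (hmem v).2.2
    have h2 : ∑ u, (L u : ℚ) * (2 * (ε u : ℚ) - (β u : ℚ) * (κ u : ℚ)) = 0 := by
      have e : ∀ u ∈ univ, (L u : ℚ) * (2 * (ε u : ℚ) - (β u : ℚ) * (κ u : ℚ)) =
          2 * ((L u : ℚ) * ((ε u : ℚ) - 1/2 * (β u : ℚ) * (κ u : ℚ))) := fun u _ => by ring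
      rw [Finset.sum_congr rfl e, ← Finset.mul_sum, hLQ, mul_zero]
    have hz : ∑ u, (L u : ℤ) * (2 * ε u - β u * κ u) = 0 := by exact_mod_cast h2
    have hz2 : ∑ u, (L u : ℤ) * (2 * ε u - β u * κ u) =
        ∑ u, (2 * ((L u : ℤ) * ε u) - b₀ * c₀ * ((L u : ℤ) * (ρ u * ρ u))) :=
      Finset.sum_congr rfl fun u _ => by rw [hβ u, hκ u]; ring
    rw [hz2, Finset.sum_sub_distrib, ← Finset.mul_sum, ← Finset.mul_sum] at hz
    simp only [hSL_def]
    linarith [hz]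
  -- constants
  set c₁ : ℤ := 2 * |SL φ| + |a₀| * |SL (fun u => ρ u * ε u)| +
      |c₀| * |SL (fun u => ρ u * δ u)| +
      |a₀ * b₀ * c₀| * |SL (fun u => ρ u * ρ u * ρ u)| with hc1_def
  have hc1 : 0 ≤ c₁ := by positivity
  set m : ℕ := c₁.toNat + 1 with hm_def
  have hm0 : (0 : ℤ) < (m : ℤ) := by exact_mod_cast Nat.succ_pos _
  have hmc : c₁ < (m : ℤ) := by
    rw [hm_def]; push_cast; linarith [Int.self_le_toNat c₁]
  -- the words
  set rest : Finset (Fin k) := (univ.erase i).erase j with hrest_def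
  set X : List (Fin k) := List.replicate (m * L i) i with hX_def
  set Y : List (Fin k) := List.replicate (m * L j) j with hY_def
  set Z : List (Fin k) := rest.toList.flatMap (fun u => List.replicate (m * L u) u) with hZ_def
  set w1 : List (Fin k) := X ++ (Y ++ Z) with hw1_def
  set w2 : List (Fin k) := Y ++ (X ++ Z) with hw2_def
  have hjmem : j ∈ univ.erase i := Finset.mem_erase.mpr ⟨Ne.symm hij', mem_univ j⟩
  -- Parikh sums
  have hSgZ : ∀ g : Fin k → ℤ, Sg g Z = ∑ u ∈ rest, ((m * L u : ℕ) : ℤ) * g u := by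
    intro g
    rw [hZ_def, Sg_flatMap]
    simp only [Sg_replicate]
    exact Finset.sum_map_toList rest _
  have hsum_build : ∀ g : Fin k → ℤ,
      ((m * L i : ℕ) : ℤ) * g i + (((m * L j : ℕ) : ℤ) * g j +
        ∑ u ∈ rest, ((m * L u : ℕ) : ℤ) * g u) = (m : ℤ) * SL g := by
    intro g
    have hbody : ∀ u, ((m * L u : ℕ) : ℤ) * g u = (m : ℤ) * ((L u : ℤ) * g u) := by
      intro u; push_cast; ring
    simp only [hSL_def, Finset.mul_sum]
    rw [← Finset.add_sum_erase _ _ (mem_univ i), ← Finset.add_sum_erase _ _ hjmem]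
    rw [hbody i, hbody j]
    congr 2
    exact Finset.sum_congr rfl fun u _ => hbody u
  have hSg1 : ∀ g : Fin k → ℤ, Sg g w1 = (m : ℤ) * SL g := by
    intro g
    rw [hw1_def]
    simp only [Sg_append, hX_def, hY_def, Sg_replicate, hSgZ g]
    rw [← hsum_build g]
  have hSg2 : ∀ g : Fin k → ℤ, Sg g w2 = (m : ℤ) * SL g := by
    intro g
    rw [hw2_def]
    simp only [Sg_append, hX_def, hY_def, Sg_replicate, hSgZ g]
    rw [← hsum_build g]
    ring
  have hSg1r : ∀ g : Fin k → ℤ, Sg g w1.reverse = (m : ℤ) * SL g := fun g => by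
    rw [Sg_reverse]; exact hSg1 g
  have hSg2r : ∀ g : Fin k → ℤ, Sg g w2.reverse = (m : ℤ) * SL g := fun g => by
    rw [Sg_reverse]; exact hSg2 g
  -- products are Emat
  have hvan : ∀ w : List (Fin k), (∀ g : Fin k → ℤ, Sg g w = (m : ℤ) * SL g) →
      (w.map A).prod = Emat (D14 α β κ δ ε φ w) := by
    intro w hw
    have hsα : Sg α w = 0 := by
      rw [Sg_alpha α ρ a₀ hα w, hw ρ, hSLρ]; ring
    have hsβ : Sg β w = 0 := by
      rw [Sg_beta β ρ b₀ hβ w, hw ρ, hSLρ]; ring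
    have hsκ : Sg κ w = 0 := by
      rw [Sg_kappa κ ρ c₀ hκ w, hw ρ, hSLρ]; ring
    have e13 := two_D13 α β δ ρ a₀ b₀ hα hβ w
    have e24 := two_D24 β κ ε ρ b₀ c₀ hβ hκ w
    rw [hw ρ, hw δ, hw (fun u => ρ u * ρ u), hSLρ, mul_zero] at e13
    rw [hw ρ, hw ε, hw (fun u => ρ u * ρ u), hSLρ, mul_zero] at e24
    have h13 : D13 α β δ w = 0 := by
      have h2 : 2 * D13 α β δ w = 0 := by linear_combination e13 + (m : ℤ) * hSLδ'
      linarith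
    have h24 : D24 β κ ε w = 0 := by
      have h2 : 2 * D24 β κ ε w = 0 := by linear_combination e24 + (m : ℤ) * hSLε'
      linarith
    rw [prod_word α β κ δ ε φ A hA w, hsα, hsβ, hsκ, h13, h24]
    rfl
  -- memberships
  have hmLi : m * L i ≠ 0 := by
    have := hL1 i; rw [hm_def]; exact Nat.mul_ne_zero (Nat.succ_ne_zero _) (by omega)
  have hmLj : m * L j ≠ 0 := by
    have := hL1 j; rw [hm_def]; exact Nat.mul_ne_zero (Nat.succ_ne_zero _) (by omega)
  have hXne : X ≠ [] := by rw [hX_def]; simp [hmLi]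
  have hYne : Y ≠ [] := by rw [hY_def]; simp [hmLj]
  have hw1ne : w1 ≠ [] := by
    rw [hw1_def]; intro h; exact hXne (List.append_eq_nil_iff.mp h).1
  have hw2ne : w2 ≠ [] := by
    rw [hw2_def]; intro h; exact hYne (List.append_eq_nil_iff.mp h).1
  have hE1 : Emat (D14 α β κ δ ε φ w1) ∈ Subsemigroup.closure (Set.range A) := by
    have := prod_word_mem A w1 hw1ne; rwa [hvan w1 hSg1] at this
  have hE1r : Emat (D14 α β κ δ ε φ w1.reverse) ∈ Subsemigroup.closure (Set.range A) := by
    have := prod_word_mem A w1.reverse (by simp [hw1ne]); rwa [hvan w1.reverse hSg1r] at this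
  have hE2 : Emat (D14 α β κ δ ε φ w2) ∈ Subsemigroup.closure (Set.range A) := by
    have := prod_word_mem A w2 hw2ne; rwa [hvan w2 hSg2] at this
  have hE2r : Emat (D14 α β κ δ ε φ w2.reverse) ∈ Subsemigroup.closure (Set.range A) := by
    have := prod_word_mem A w2.reverse (by simp [hw2ne]); rwa [hvan w2.reverse hSg2r] at this
  -- swap identities
  set V : ℤ := ((m * L i : ℕ) : ℤ) * ((m * L j : ℕ) : ℤ) * d with hV_def
  have hsv := swap_val α β κ δ ε ρ a₀ b₀ c₀ hα hβ hκ i j (m * L i) (m * L j)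
  rw [← hX_def, ← hY_def] at hsv
  have hq12 : D14 α β κ δ ε φ w1 - D14 α β κ δ ε φ w2 = V := by
    have hsd := swap_diff α β κ δ ε φ ρ a₀ b₀ c₀ hα hβ hκ [] X Y Z
    simp only [List.nil_append] at hsd
    rw [hw1_def, hw2_def, hV_def, hd_def]
    linarith [hsd, hsv]
  have hqr : D14 α β κ δ ε φ w2.reverse - D14 α β κ δ ε φ w1.reverse = V := by
    have e1 : w1.reverse = Z.reverse ++ (Y ++ (X ++ ([] : List (Fin k)))) := by
      rw [hw1_def, hX_def, hY_def]
      simp [List.reverse_append, List.reverse_replicate, List.append_assoc]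
    have e2 : w2.reverse = Z.reverse ++ (X ++ (Y ++ ([] : List (Fin k)))) := by
      rw [hw2_def, hX_def, hY_def]
      simp [List.reverse_append, List.reverse_replicate, List.append_assoc]
    have hsd := swap_diff α β κ δ ε φ ρ a₀ b₀ c₀ hα hβ hκ Z.reverse X Y []
    rw [← e2, ← e1] at hsd
    rw [hV_def, hd_def]
    linarith [hsd, hsv]
  -- bound on sums with reverses
  have hbound : ∀ w : List (Fin k), (∀ g : Fin k → ℤ, Sg g w = (m : ℤ) * SL g) →
      |D14 α β κ δ ε φ w + D14 α β κ δ ε φ w.reverse| ≤ (m : ℤ) * c₁ := by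
    intro w hw
    have hrev := D14_rev α β κ δ ε φ ρ a₀ b₀ c₀ hα hβ hκ w
    have h3 := three_Nw ρ w
    rw [hw ρ, hSLρ, mul_zero] at hrev h3
    rw [hw φ, hw (fun u => ρ u * ε u), hw (fun u => ρ u * δ u)] at hrev
    rw [hw (fun u => ρ u * ρ u * ρ u)] at h3
    have heq : D14 α β κ δ ε φ w + D14 α β κ δ ε φ w.reverse =
        (m : ℤ) * (2 * SL φ - a₀ * SL (fun u => ρ u * ε u) - c₀ * SL (fun u => ρ u * δ u)) +
          a₀ * b₀ * c₀ * Nw ρ w := by linear_combination hrev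
    have hN : 3 * (a₀ * b₀ * c₀ * Nw ρ w) =
        (m : ℤ) * (a₀ * b₀ * c₀ * (2 * SL (fun u => ρ u * ρ u * ρ u))) := by
      linear_combination a₀ * b₀ * c₀ * h3
    have hNb : |a₀ * b₀ * c₀ * Nw ρ w| ≤
        (m : ℤ) * (|a₀ * b₀ * c₀| * |SL (fun u => ρ u * ρ u * ρ u)|) := by
      have h1 : (3 : ℤ) * |a₀ * b₀ * c₀ * Nw ρ w| =
          2 * ((m : ℤ) * (|a₀ * b₀ * c₀| * |SL (fun u => ρ u * ρ u * ρ u)|)) := by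
        calc (3 : ℤ) * |a₀ * b₀ * c₀ * Nw ρ w| = |3 * (a₀ * b₀ * c₀ * Nw ρ w)| := by
              rw [abs_mul 3 (a₀ * b₀ * c₀ * Nw ρ w)]; norm_num
          _ = |(m : ℤ) * (a₀ * b₀ * c₀ * (2 * SL (fun u => ρ u * ρ u * ρ u)))| := by rw [hN]
          _ = 2 * ((m : ℤ) * (|a₀ * b₀ * c₀| * |SL (fun u => ρ u * ρ u * ρ u)|)) := by
              rw [abs_mul ((m : ℤ)) (a₀ * b₀ * c₀ * (2 * SL (fun u => ρ u * ρ u * ρ u))),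
                abs_mul (a₀ * b₀ * c₀) (2 * SL (fun u => ρ u * ρ u * ρ u)),
                abs_mul 2 (SL (fun u => ρ u * ρ u * ρ u)), abs_of_nonneg hm0.le,
                abs_of_nonneg (by norm_num : (0 : ℤ) ≤ 2)]
              ring
      have h2 : 0 ≤ (m : ℤ) * (|a₀ * b₀ * c₀| * |SL (fun u => ρ u * ρ u * ρ u)|) :=
        mul_nonneg hm0.le (mul_nonneg (abs_nonneg _) (abs_nonneg _))
      linarith
    have htri : ∀ x y z : ℤ, |x - y - z| ≤ |x| + |y| + |z| := by
      intro x y z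
      calc |x - y - z| ≤ |x - y| + |z| := by
            have := abs_add_le (x - y) (-z); simpa [sub_eq_add_neg] using this
        _ ≤ |x| + |y| + |z| := by
            have := abs_add_le x (-y)
            have h' : |x - y| ≤ |x| + |y| := by simpa [sub_eq_add_neg] using this
            linarith
    have ht1 : |2 * SL φ - a₀ * SL (fun u => ρ u * ε u) - c₀ * SL (fun u => ρ u * δ u)| ≤
        2 * |SL φ| + |a₀| * |SL (fun u => ρ u * ε u)| + |c₀| * |SL (fun u => ρ u * δ u)| := by
      have := htri (2 * SL φ) (a₀ * SL (fun u => ρ u * ε u)) (c₀ * SL (fun u => ρ u * δ u))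
      rw [abs_mul, abs_mul, abs_mul] at this
      simpa using this
    rw [heq]
    calc |(m : ℤ) * (2 * SL φ - a₀ * SL (fun u => ρ u * ε u) - c₀ * SL (fun u => ρ u * δ u)) +
          a₀ * b₀ * c₀ * Nw ρ w|
        ≤ |(m : ℤ) * (2 * SL φ - a₀ * SL (fun u => ρ u * ε u) -
            c₀ * SL (fun u => ρ u * δ u))| + |a₀ * b₀ * c₀ * Nw ρ w| := abs_add_le _ _
      _ = (m : ℤ) * |2 * SL φ - a₀ * SL (fun u => ρ u * ε u) -
            c₀ * SL (fun u => ρ u * δ u)| + |a₀ * b₀ * c₀ * Nw ρ w| := by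
          rw [abs_mul, abs_of_nonneg hm0.le]
      _ ≤ (m : ℤ) * c₁ := by
          rw [hc1_def]
          have hmul := mul_le_mul_of_nonneg_left ht1 hm0.le
          linarith [hNb, hmul]
  have hVbig : (m : ℤ) * c₁ < |V| := by
    have h1 : (m : ℤ) ≤ ((m * L i : ℕ) : ℤ) := by
      push_cast
      nlinarith [hm0, (by exact_mod_cast hL1 i : (1 : ℤ) ≤ (L i : ℤ))]
    have h2 : (m : ℤ) ≤ ((m * L j : ℕ) : ℤ) := by
      push_cast
      nlinarith [hm0, (by exact_mod_cast hL1 j : (1 : ℤ) ≤ (L j : ℤ))]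
    have hd1 : (1 : ℤ) ≤ |d| := by
      rcases lt_or_gt_of_ne hd with h | h
      · rw [abs_of_neg h]; omega
      · rw [abs_of_pos h]; omega
    have hVabs : |V| = ((m * L i : ℕ) : ℤ) * ((m * L j : ℕ) : ℤ) * |d| := by
      rw [hV_def, abs_mul, abs_mul, abs_of_nonneg (Int.natCast_nonneg _),
        abs_of_nonneg (Int.natCast_nonneg _)]
    rw [hVabs]
    have hstep1 : (m : ℤ) * c₁ < (m : ℤ) * (m : ℤ) := by
      exact mul_lt_mul_of_pos_left hmc hm0
    have hstep2 : (m : ℤ) * (m : ℤ) ≤ ((m * L i : ℕ) : ℤ) * ((m * L j : ℕ) : ℤ) := by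
      exact mul_le_mul h1 h2 hm0.le (by positivity)
    have hstep3 : ((m * L i : ℕ) : ℤ) * ((m * L j : ℕ) : ℤ) ≤
        ((m * L i : ℕ) : ℤ) * ((m * L j : ℕ) : ℤ) * |d| := by
      nlinarith [Int.natCast_nonneg (m * L i), Int.natCast_nonneg (m * L j)]
    linarith
  obtain ⟨x, y, hxor, hyor, hx0, hy0⟩ :=
    four_vals (D14 α β κ δ ε φ w1) (D14 α β κ δ ε φ w1.reverse)
      (D14 α β κ δ ε φ w2) (D14 α β κ δ ε φ w2.reverse) ((m : ℤ) * c₁) V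
      (hbound w1 hSg1) (hbound w2 hSg2) hq12 hqr hVbig
  have hEx : Emat x ∈ Subsemigroup.closure (Set.range A) := by
    rcases hxor with rfl | rfl | rfl | rfl <;> assumption
  have hEy : Emat y ∈ Subsemigroup.closure (Set.range A) := by
    rcases hyor with rfl | rfl | rfl | rfl <;> assumption
  exact one_mem_of_vals _ x y hx0 hy0 hEx hEy
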